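/- arXiv:1911.01342 — 3 statements merged into one kernel-verified Lean document; each statement's English description precedes it below -/
import Mathlib

section
/- If H is a subgraph of a graph G and X is a set of vertices of H, then the partial burning number of X in G is at most the partial burning number of X in H, which in turn is at most the partial burning number of X in G plus the number of edges of G minus the number of edges of H. -/
open SimpleGraph

/-- The set of vertices burned after `t` rounds of the burning process on `G`,
where `s i` is the source of fire chosen in round `i + 1`. -/
def burnSet {V : Type*} (G : SimpleGraph V) (s : ℕ → V) : ℕ → Set V
  | 0 => ∅
  | t + 1 => burnSet G s t ∪ {w | ∃ u ∈ burnSet G s t, G.Adj u w} ∪ {s t}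

/-- The partial burning number `b(G, S)`: the least number of rounds needed to
burn every vertex of `S`. -/
noncomputable def pburn {V : Type*} (G : SimpleGraph V) (S : Set V) : ℕ :=
  sInf {r | ∃ s : ℕ → V, S ⊆ burnSet G s r}

/-- The burning number `b(G)`. -/
noncomputable def burn {V : Type*} (G : SimpleGraph V) : ℕ :=
  pburn G Set.univ

/-- The ball of radius `t` around `v` in graph distance. -/
def gball {V : Type*} (G : SimpleGraph V) (v : V) (t : ℕ) : Set V :=
  {w | G.dist v w ≤ t}

/-- The `m × n` Cartesian grid `P_m □ P_n`; the first coordinate is the height (row). -/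
def gridGraph (m n : ℕ) : SimpleGraph (Fin m × Fin n) :=
  (pathGraph m) □ (pathGraph n)

/-!
Every burning sequence of `H` is one of `G`, and fire spreads at least as fast along the larger
edge set, so `b(G, X) ≤ b(H, X)`. Conversely, run an optimal burning sequence `s` of `G` in `H`,
but first ignite, one per round, every vertex of `H` that `s` sets on fire through an edge of
`G` missing from `H`. Such a vertex determines the edge it first caught fire through, and distinct
vertices determine distinct edges, so at most `|E(G)| - |E(H)|` rounds are added; after them
the fire in `H` stays ahead of the fire in `G`.
-/

section Burning

variable {V : Type*} (G : SimpleGraph V) (s : ℕ → V)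

lemma burnSet_subset_succ (t : ℕ) : burnSet G s t ⊆ burnSet G s (t + 1) :=
  fun _ hx => Or.inl (Or.inl hx)

lemma burnSet_mono {t t' : ℕ} (h : t ≤ t') : burnSet G s t ⊆ burnSet G s t' := by
  induction h with
  | refl => exact subset_rfl
  | step _ ih => exact ih.trans (burnSet_subset_succ G s _)

lemma source_mem_burnSet {i t : ℕ} (h : i < t) : s i ∈ burnSet G s t :=
  burnSet_mono G s h (Or.inr rfl)

lemma pburn_empty : pburn G ∅ = 0 := by
  rcases isEmpty_or_nonempty V with hV | ⟨⟨v⟩⟩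
  · refine Nat.sInf_eq_zero.2 (Or.inr ?_)
    exact Set.eq_empty_of_forall_notMem fun _ ⟨s, _⟩ => hV.false (s 0)
  · exact Nat.sInf_eq_zero.2 (Or.inl ⟨fun _ => v, Set.empty_subset _⟩)

end Burning

lemma Set.Finite.exists_enumeration_append {α : Type*} {S : Set α} (hS : S.Finite)
    (q : ℕ → α) : ∃ s : ℕ → α,
      (∀ x ∈ S, ∃ i < S.ncard, s i = x) ∧ ∀ t, s (S.ncard + t) = q t := by
  obtain ⟨n, f, rfl⟩ := hS.fin_embedding
  rw [Set.ncard_range_of_injective f.injective, Nat.card_eq_fintype_card, Fintype.card_fin]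
  refine ⟨fun i => if h : i < n then f ⟨i, h⟩ else q (i - n), ?_, fun t => ?_⟩
  · rintro _ ⟨j, rfl⟩
    exact ⟨j, j.isLt, dif_pos j.isLt⟩
  · simp

lemma exists_subset_burnSet_pburn {V : Type*} [Finite V] [Nonempty V] (G : SimpleGraph V)
    (S : Set V) : ∃ s : ℕ → V, S ⊆ burnSet G s (pburn G S) := by
  obtain ⟨s, hs, -⟩ :=
    (Set.finite_univ (α := V)).exists_enumeration_append fun _ => Classical.arbitrary V
  refine Nat.sInf_mem (s := {r | ∃ s : ℕ → V, S ⊆ burnSet G s r})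
    ⟨(Set.univ : Set V).ncard, s, fun v _ => ?_⟩
  obtain ⟨i, hi, rfl⟩ := hs v trivial
  exact source_mem_burnSet G s hi

namespace SimpleGraph.Subgraph

variable {V : Type*} {G : SimpleGraph V} (H : G.Subgraph)

lemma mem_burnSet_of_mem_burnSet_coe {s : ℕ → H.verts} {t : ℕ} {x : H.verts}
    (hx : x ∈ burnSet H.coe s t) : (x : V) ∈ burnSet G (fun i => s i) t := by
  induction t generalizing x with
  | zero => exact hx.elim
  | succ t ih =>
    rcases hx with (hx | ⟨u, hu, hadj⟩) | rfl
    · exact Or.inl (Or.inl (ih hx))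
    · exact Or.inl (Or.inr ⟨u, ih hu, H.adj_sub hadj⟩)
    · exact Or.inr rfl

def ignitedOutside (s : ℕ → V) : Set V :=
  {w | ∃ t, ∃ u ∈ burnSet G s t, w ∉ burnSet G s t ∧ G.Adj u w ∧ ¬ H.Adj u w}

lemma ncard_ignitedOutside_le [Finite V] (s : ℕ → V) :
    (H.ignitedOutside s).ncard ≤ G.edgeSet.ncard - H.edgeSet.ncard := by
  have hcross : ∀ w ∈ H.ignitedOutside s, ∃ u, ∃ t, u ∈ burnSet G s t ∧
      w ∉ burnSet G s t ∧ G.Adj u w ∧ ¬ H.Adj u w := fun w ⟨t, u, hu⟩ => ⟨u, t, hu⟩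
  choose! f t hft hwt hadj hnadj using hcross
  rw [← Set.ncard_sdiff H.edgeSet_subset (Set.toFinite _)]
  refine Set.ncard_le_ncard_of_injOn (fun w => s(f w, w))
    (fun w hw => ⟨hadj w hw, hnadj w hw⟩) (fun w₁ hw₁ w₂ hw₂ he => ?_) (Set.toFinite _)
  rcases Sym2.eq_iff.1 he with ⟨-, h⟩ | ⟨h₁, h₂⟩
  · exact h
  -- the edge `w₁w₂` would carry fire both ways: each endpoint burns strictly before the other
  rcases le_total (t w₁) (t w₂) with hle | hle
  · exact (hwt w₂ hw₂ (burnSet_mono G s hle (h₁ ▸ hft w₁ hw₁))).elim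
  · exact (hwt w₁ hw₁ (burnSet_mono G s hle (h₂ ▸ hft w₂ hw₂))).elim

lemma mem_burnSet_coe_add_of_mem_burnSet {s : ℕ → V} {s' : ℕ → H.verts} {m : ℕ}
    (hpre : ∀ x : H.verts, (x : V) ∈ H.ignitedOutside s → ∃ i < m, s' i = x)
    (hshift : ∀ t (x : H.verts), (x : V) = s t → s' (m + t) = x) {t : ℕ} {x : H.verts}
    (hx : (x : V) ∈ burnSet G s t) : x ∈ burnSet H.coe s' (t + m) := by
  induction t generalizing x with
  | zero => exact hx.elim
  | succ t ih =>
    rw [Nat.add_right_comm]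
    by_cases hold : (x : V) ∈ burnSet G s t
    · exact burnSet_subset_succ _ _ _ (ih hold)
    rcases hx with (hx | ⟨u, hu, hadj⟩) | hx
    · exact (hold hx).elim
    · by_cases hH : H.Adj u x
      · exact Or.inl (Or.inr ⟨⟨u, H.edge_vert hH⟩, ih hu, hH⟩)
      · obtain ⟨i, hi, rfl⟩ := hpre x ⟨t, u, hu, hold, hadj, hH⟩
        exact source_mem_burnSet _ _ (by omega)
    · rw [← hshift t x hx]
      exact source_mem_burnSet _ _ (by omega)

lemma exists_burnSet_coe_delayed [Finite V] [Nonempty H.verts] (s : ℕ → V) :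
    ∃ s' : ℕ → H.verts, ∀ t (x : H.verts), (x : V) ∈ burnSet G s t →
      x ∈ burnSet H.coe s' (t + (G.edgeSet.ncard - H.edgeSet.ncard)) := by
  classical
  set D : Set H.verts := {x | (x : V) ∈ H.ignitedOutside s}
  let q : ℕ → H.verts := fun t =>
    if h : s t ∈ H.verts then ⟨s t, h⟩ else Classical.arbitrary _
  obtain ⟨s', hpre, hshift⟩ := (Set.toFinite D).exists_enumeration_append q
  have hD : D.ncard ≤ G.edgeSet.ncard - H.edgeSet.ncard := by
    refine le_trans ?_ (H.ncard_ignitedOutside_le s)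
    rw [← Set.ncard_image_of_injective D Subtype.val_injective]
    exact Set.ncard_le_ncard (by rintro _ ⟨x, hx, rfl⟩; exact hx) (Set.toFinite _)
  refine ⟨s', fun t x hx => burnSet_mono _ _ (t := t + D.ncard) (by omega) ?_⟩
  refine H.mem_burnSet_coe_add_of_mem_burnSet hpre (fun t x hxt => ?_) hx
  rw [hshift]
  simp only [q, dif_pos (hxt ▸ x.2)]
  exact Subtype.ext hxt.symm

end SimpleGraph.Subgraph

/-- If `H` is a subgraph of `G` and `X ⊆ V(H)`, then
`b(G, X) ≤ b(H, X) ≤ b(G, X) + |E(G)| - |E(H)|`. -/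
theorem pburn_subgraph {V : Type*} [Fintype V] (G : SimpleGraph V) (H : G.Subgraph)
    (X : Set V) (hX : X ⊆ H.verts) :
    pburn G X ≤ pburn H.coe {x : H.verts | (x : V) ∈ X} ∧
      pburn H.coe {x : H.verts | (x : V) ∈ X} ≤
        pburn G X + (G.edgeSet.ncard - H.edgeSet.ncard) := by
  rcases isEmpty_or_nonempty H.verts with hH | hH
  · have hXe : X = ∅ := Set.eq_empty_of_forall_notMem fun x hx => hH.false ⟨x, hX hx⟩
    subst hXe
    simp only [Set.mem_empty_iff_false, Set.ofPred_false, pburn_empty]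
    omega
  have : Nonempty V := ⟨(Classical.arbitrary H.verts : V)⟩
  constructor
  · obtain ⟨s', hs'⟩ := exists_subset_burnSet_pburn H.coe {x : H.verts | (x : V) ∈ X}
    exact Nat.sInf_le
      ⟨_, fun x hx => H.mem_burnSet_of_mem_burnSet_coe (x := ⟨x, hX hx⟩) (hs' hx)⟩
  · obtain ⟨s, hs⟩ := exists_subset_burnSet_pburn G X
    obtain ⟨s', hs'⟩ := H.exists_burnSet_coe_delayed s
    exact Nat.sInf_le ⟨s', fun x hx => hs' _ x (hs hx)⟩
end

section
/- If G and H are connected graphs, then b(G □ H) ≤ min{b(G) + rad(H), b(H) + rad(G)}. -/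
open SimpleGraph

/-- The radius of a graph: the least `r` such that some vertex has every vertex
within distance `r` of it. -/
noncomputable def grad {V : Type*} (G : SimpleGraph V) : ℕ :=
  sInf {r | ∃ v : V, ∀ w : V, G.dist v w ≤ r}

/-
Burn `G` optimally inside the copy `G × {c}` of `G`, where `c` is a center of `H`. After `b(G)`
rounds every vertex `(u, c)` is on fire, and fire spreads from `(u, c)` to `(u, w)` along an `H`-fibre
in `dist c w ≤ rad(H)` further rounds. The other bound follows by the symmetry `G □ H ≃ H □ G`.
-/

section

variable {V W : Type*} {G : SimpleGraph V} {H : SimpleGraph W}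

theorem burnSet_mono_s6 (s : ℕ → V) : Monotone (burnSet G s) :=
  monotone_nat_of_le_succ fun _ _ hx => Or.inl (Or.inl hx)

theorem mem_burnSet_of_lt (s : ℕ → V) {i t : ℕ} (h : i < t) : s i ∈ burnSet G s t :=
  burnSet_mono_s6 s h (Or.inr rfl)

theorem mem_burnSet_add_length {s : ℕ → V} {u w : V} {t : ℕ} (hu : u ∈ burnSet G s t)
    (p : G.Walk u w) : w ∈ burnSet G s (t + p.length) := by
  induction p generalizing t with
  | nil => exact hu
  | cons hadj _ ih =>
    rw [Walk.length_cons, add_comm _ 1, ← add_assoc]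
    exact ih (Or.inl (Or.inr ⟨_, hu, hadj⟩))

theorem SimpleGraph.Hom.apply_mem_burnSet (f : G →g H) {s : ℕ → V} {v : V} {t : ℕ}
    (hv : v ∈ burnSet G s t) : f v ∈ burnSet H (f ∘ s) t := by
  induction t generalizing v with
  | zero => exact hv.elim
  | succ t ih =>
    rcases hv with (hv | ⟨u, hu, hadj⟩) | rfl
    · exact Or.inl (Or.inl (ih hv))
    · exact Or.inl (Or.inr ⟨f u, ih hu, f.map_adj hadj⟩)
    · exact Or.inr rfl

theorem exists_univ_subset_burnSet_of_surjective (f : G →g H) (hf : Function.Surjective f) {t : ℕ}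
    (h : ∃ s, Set.univ ⊆ burnSet G s t) : ∃ s, Set.univ ⊆ burnSet H s t := by
  obtain ⟨s, hs⟩ := h
  refine ⟨f ∘ s, fun w _ => ?_⟩
  obtain ⟨v, rfl⟩ := hf w
  exact f.apply_mem_burnSet (hs trivial)

theorem SimpleGraph.Iso.burn_eq (f : G ≃g H) : burn G = burn H := by
  unfold burn pburn
  congr 1
  ext t
  exact ⟨exists_univ_subset_burnSet_of_surjective f.toHom f.surjective,
    exists_univ_subset_burnSet_of_surjective f.symm.toHom f.symm.surjective⟩

theorem burn_le_of_hom (f : G →g H) {s : ℕ → V} {t d : ℕ} (hs : ∀ v, v ∈ burnSet G s t)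
    (hd : ∀ w, ∃ v, ∃ p : H.Walk (f v) w, p.length ≤ d) : burn H ≤ t + d := by
  refine Nat.sInf_le ⟨f ∘ s, fun w _ => ?_⟩
  obtain ⟨v, p, hp⟩ := hd w
  exact burnSet_mono_s6 _ (by omega) (mem_burnSet_add_length (f.apply_mem_burnSet (hs v)) p)

theorem exists_forall_mem_burnSet_burn [Finite V] [Nonempty V] (G : SimpleGraph V) :
    ∃ s : ℕ → V, ∀ v, v ∈ burnSet G s (burn G) := by
  obtain ⟨n, ⟨e⟩⟩ := Finite.exists_equiv_fin V
  let s : ℕ → V := fun i => if h : i < n then e.symm ⟨i, h⟩ else Classical.arbitrary V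
  have hs : ∀ v, v ∈ burnSet G s n := fun v => by
    simpa [s] using mem_burnSet_of_lt (G := G) s (e v).2
  have hne : {t | ∃ s : ℕ → V, Set.univ ⊆ burnSet G s t}.Nonempty := ⟨n, s, fun v _ => hs v⟩
  obtain ⟨s', hs'⟩ := Nat.sInf_mem hne
  exact ⟨s', fun v => hs' trivial⟩

theorem exists_forall_dist_le_grad [Finite V] [Nonempty V] (G : SimpleGraph V) :
    ∃ v, ∀ w, G.dist v w ≤ grad G := by
  let v := Classical.arbitrary V
  obtain ⟨M, hM⟩ := (Set.finite_range (G.dist v)).bddAbove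
  exact Nat.sInf_mem (s := {r | ∃ v : V, ∀ w, G.dist v w ≤ r}) ⟨M, v, fun w => hM ⟨w, rfl⟩⟩

theorem burn_boxProd_le_burn_add_grad [Finite V] [Nonempty V] [Finite W] (G : SimpleGraph V)
    (hH : H.Connected) : burn (G □ H) ≤ burn G + grad H := by
  have := hH.nonempty
  obtain ⟨s, hs⟩ := exists_forall_mem_burnSet_burn G
  obtain ⟨c, hc⟩ := exists_forall_dist_le_grad H
  refine burn_le_of_hom (boxProdLeft G H c).toHom hs fun ⟨u, w⟩ => ?_
  obtain ⟨p, hp⟩ := hH.exists_walk_length_eq_dist c w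
  exact ⟨u, p.boxProdRight G u, (Walk.length_map _ _).trans_le (hp ▸ hc w)⟩

end

/-- For connected graphs `G` and `H`,
`b(G □ H) ≤ min (b(G) + rad(H)) (b(H) + rad(G))`. -/
theorem burn_boxProd_le {V W : Type*} [Fintype V] [Fintype W]
    (G : SimpleGraph V) (H : SimpleGraph W) (hG : G.Connected) (hH : H.Connected) :
    burn (G □ H) ≤ min (burn G + grad H) (burn H + grad G) := by
  have := hG.nonempty
  have := hH.nonempty
  refine le_min (burn_boxProd_le_burn_add_grad G hH) ?_
  rw [(boxProdComm G H).burn_eq]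
  exact burn_boxProd_le_burn_add_grad H hG
end

section
/- For every integer ℓ ≥ 1 and c > 0 with ℓ = ⌈(c/2)^{2/3}⌉ and c√n an integer, the burning number of the fence graph satisfies b(G_{c√n, n}) ≤ 2⌈√(ℓn)⌉ + ℓ − 1. -/
/-!
Put `k = ⌈√(ℓn)⌉` and `T = 2k + ℓ - 1`. The hypothesis on `ℓ` gives `c² ≤ 4ℓ³`, hence
`m² = c²n ≤ 4ℓ²·ℓn ≤ (2ℓk)²`, so the rows split into `ℓ` strips of height `2k + 1`. The strips take
turns: source `aℓ + j`, lit in round `aℓ + j + 1` on the middle row of strip `j`, spends `k` of its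
radius on the strip's height and keeps the horizontal radius `D - aℓ`, where `D = k + ℓ - 2 - j`.
Laid side by side, these intervals cover `∑ₐ (2(D - aℓ) + 1) ≥ (D + 1)²/ℓ ≥ k²/ℓ ≥ n` columns.
-/

open SimpleGraph

namespace SimpleGraph

variable {V : Type*} (G : SimpleGraph V) (s : ℕ → V)

lemma burnSet_mono : Monotone (burnSet G s) :=
  monotone_nat_of_le_succ fun _ _ hv => Or.inl (Or.inl hv)

variable {G s}

lemma mem_burnSet_of_walk {t : ℕ} {u v : V} (hu : u ∈ burnSet G s t) (p : G.Walk u v) :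
    v ∈ burnSet G s (t + p.length) := by
  induction p generalizing t with
  | nil => exact hu
  | cons h p ih =>
    rw [Walk.length_cons, add_comm _ 1, ← add_assoc]
    exact ih (t := t + 1) (Or.inl (Or.inr ⟨_, hu, h⟩))

lemma mem_burnSet_of_edist_le {t d : ℕ} {u v : V} (hu : u ∈ burnSet G s t)
    (h : G.edist u v ≤ d) : v ∈ burnSet G s (t + d) := by
  obtain ⟨p, hp⟩ := exists_walk_of_edist_ne_top (h.trans_lt (ENat.natCast_lt_top d)).ne
  have hpd : p.length ≤ d := by rw [← hp] at h; exact_mod_cast h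
  exact burnSet_mono G s (by omega) (mem_burnSet_of_walk hu p)

lemma pburn_le_of_forall_exists_edist_le {S : Set V} {T : ℕ}
    (h : ∀ v ∈ S, ∃ i d, i + 1 + d ≤ T ∧ G.edist (s i) v ≤ d) : pburn G S ≤ T := by
  refine Nat.sInf_le ⟨s, fun v hv => ?_⟩
  obtain ⟨i, d, hT, hd⟩ := h v hv
  exact burnSet_mono G s hT (mem_burnSet_of_edist_le (Or.inr rfl) hd)

lemma burn_eq_zero_of_isEmpty [IsEmpty V] : burn G = 0 := by
  rw [burn, pburn, Nat.sInf_eq_zero]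
  exact Or.inr (Set.eq_empty_of_forall_notMem fun _ ⟨s, _⟩ => isEmptyElim (s 0))

lemma edist_pathGraph_le {n : ℕ} (u v : Fin n) : (pathGraph n).edist u v ≤ Nat.dist u v := by
  wlog huv : u ≤ v generalizing u v
  · rw [edist_comm, Nat.dist_comm]
    exact this v u (le_of_not_ge huv)
  rw [Nat.dist_eq_sub_of_le (Fin.le_def.1 huv)]
  obtain ⟨d, hd⟩ : ∃ d, v.val = u.val + d := ⟨v - u, by omega⟩
  induction d generalizing v with
  | zero => simp [Fin.ext (by omega : v.val = u.val)]
  | succ d ih =>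
    let w : Fin n := ⟨v - 1, by omega⟩
    have hw : (pathGraph n).Adj w v := pathGraph_adj.2 (Or.inl (by simp [w]; omega))
    calc (pathGraph n).edist u v ≤ (pathGraph n).edist u w + (pathGraph n).edist w v :=
          SimpleGraph.edist_triangle
      _ ≤ (w - u : ℕ) + 1 :=
          add_le_add (ih w (Fin.le_def.2 (by simp [w]; omega)) (by simp [w]; omega))
            (edist_le_one_iff_adj_or_eq.2 (Or.inl hw))
      _ = (v - u : ℕ) := by norm_cast; simp [w]; omega

lemma edist_gridGraph_le {m n : ℕ} (u v : Fin m × Fin n) :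
    (gridGraph m n).edist u v ≤ (Nat.dist u.1 v.1 + Nat.dist u.2 v.2 : ℕ) := by
  rw [gridGraph, edist_boxProd, Nat.cast_add]
  exact add_le_add (edist_pathGraph_le _ _) (edist_pathGraph_le _ _)

end SimpleGraph

open Finset

lemma Nat.dist_min_le_of_le {c y M : ℕ} (hy : y ≤ M) : Nat.dist (min c M) y ≤ Nat.dist c y := by
  simp only [Nat.dist]; omega

/-- The centre of the `a`-th of the intervals of radii `r 0, r 1, …` laid side by side in `ℕ`,
starting at `0`. -/
def packCenter (r : ℕ → ℕ) (a : ℕ) : ℕ :=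
  ∑ b ∈ range a, (2 * r b + 1) + r a

lemma exists_dist_packCenter_le (r : ℕ → ℕ) {q y : ℕ}
    (hy : y < ∑ a ∈ range q, (2 * r a + 1)) : ∃ a < q, Nat.dist (packCenter r a) y ≤ r a := by
  induction q with
  | zero => simp at hy
  | succ q ih =>
    by_cases hq : y < ∑ a ∈ range q, (2 * r a + 1)
    · obtain ⟨a, ha, h⟩ := ih hq
      exact ⟨a, by omega, h⟩
    · rw [sum_range_succ] at hy
      refine ⟨q, by omega, ?_⟩
      simp only [packCenter, Nat.dist]; omega

lemma add_one_sq_le_mul_sum_range (ℓ : ℕ) (hℓ : 0 < ℓ) (D : ℕ) :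
    (D + 1) ^ 2 ≤ ℓ * ∑ a ∈ range (D / ℓ + 1), (2 * (D - a * ℓ) + 1) := by
  induction D using Nat.strong_induction_on with
  | _ D ih =>
  rcases lt_or_ge D ℓ with hD | hD
  · rw [Nat.div_eq_of_lt hD, zero_add, sum_range_one, zero_mul, Nat.sub_zero]
    nlinarith
  · obtain ⟨E, rfl⟩ : ∃ E, D = E + ℓ := ⟨D - ℓ, by omega⟩
    have hE := ih E (by omega)
    have hshift : ∀ a, E + ℓ - (a + 1) * ℓ = E - a * ℓ := fun a => by rw [add_mul, one_mul]; omega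
    rw [Nat.add_div_right E hℓ, sum_range_succ', zero_mul, Nat.sub_zero]
    simp only [hshift]
    nlinarith

def gridSource (m n k ℓ : ℕ) (i : ℕ) : Fin (m + 1) × Fin (n + 1) :=
  (Fin.clamp (packCenter (fun _ => k) (i % ℓ)) m,
   Fin.clamp (packCenter (fun a => k + ℓ - 2 - i % ℓ - a * ℓ) (i / ℓ)) n)

theorem burn_gridGraph_le {m n k ℓ : ℕ} (hn : ℓ * n ≤ k ^ 2) (hm : m ≤ ℓ * (2 * k + 1)) :
    burn (gridGraph m n) ≤ 2 * k + ℓ - 1 := by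
  rcases isEmpty_or_nonempty (Fin m × Fin n) with hV | ⟨⟨x₀, y₀⟩⟩
  · rw [burn_eq_zero_of_isEmpty]
    exact Nat.zero_le _
  obtain ⟨m, rfl⟩ : ∃ m', m = m' + 1 := ⟨m - 1, by have := x₀.is_lt; omega⟩
  obtain ⟨n, rfl⟩ : ∃ n', n = n' + 1 := ⟨n - 1, by have := y₀.is_lt; omega⟩
  have hℓ : 0 < ℓ := Nat.pos_of_ne_zero fun h => by simp [h] at hm
  have hk : 0 < k := Nat.pos_of_ne_zero fun h => by simp [h] at hn; omega
  refine pburn_le_of_forall_exists_edist_le (s := gridSource m n k ℓ)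
    fun ⟨x, y⟩ _ => ?_
  obtain ⟨j, hj, hx⟩ := exists_dist_packCenter_le (fun _ => k) (q := ℓ) (y := x)
    (by rw [sum_const, card_range, smul_eq_mul]; omega)
  set D := k + ℓ - 2 - j with hD
  obtain ⟨a, ha, hy⟩ := exists_dist_packCenter_le (fun a => D - a * ℓ) (q := D / ℓ + 1) (y := y) (by
    have hsum := add_one_sq_le_mul_sum_range ℓ hℓ D
    have hkD : k ≤ D + 1 := by omega
    nlinarith [y.2])
  have haD : a * ℓ ≤ D := (Nat.le_div_iff_mul_le hℓ).1 (by omega)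
  have hsrc : gridSource m n k ℓ (a * ℓ + j) =
      (Fin.clamp (packCenter (fun _ => k) j) m, Fin.clamp (packCenter (fun a => D - a * ℓ) a) n) := by
    have hdiv : (a * ℓ + j) / ℓ = a := by
      rw [add_comm, Nat.add_mul_div_right _ _ hℓ, Nat.div_eq_of_lt hj, zero_add]
    simp [gridSource, Nat.mod_eq_of_lt hj, hdiv, hD]
  refine ⟨a * ℓ + j, k + (D - a * ℓ), by omega, (edist_gridGraph_le _ _).trans ?_⟩
  rw [hsrc]
  exact_mod_cast add_le_add ((Nat.dist_min_le_of_le (Nat.lt_succ_iff.1 x.2)).trans hx)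
    ((Nat.dist_min_le_of_le (Nat.lt_succ_iff.1 y.2)).trans hy)

lemma Nat.le_ceil_sqrt_sq (x : ℕ) : x ≤ ⌈Real.sqrt x⌉₊ ^ 2 := by
  have h : (x : ℝ) ≤ (⌈Real.sqrt x⌉₊ : ℝ) ^ 2 := by
    rw [← Real.sqrt_le_left (Nat.cast_nonneg _)]
    exact Nat.le_ceil _
  exact_mod_cast h

lemma sq_le_four_mul_cube_mul {c : ℝ} (hc : 0 ≤ c) {m n ℓ : ℕ} (hm : (m : ℝ) = c * Real.sqrt n)
    (hℓ : (c / 2) ^ (2 / 3 : ℝ) ≤ ℓ) : m ^ 2 ≤ 4 * ℓ ^ 3 * n := by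
  have hc3 : (c / 2) ^ 2 ≤ (ℓ : ℝ) ^ 3 := by
    calc (c / 2) ^ 2 = ((c / 2) ^ (2 / 3 : ℝ)) ^ 3 := by
          rw [← Real.rpow_mul_natCast (by positivity)]; norm_num
      _ ≤ (ℓ : ℝ) ^ 3 := by gcongr
  have h : (m : ℝ) ^ 2 ≤ 4 * ℓ ^ 3 * n := by
    rw [hm, mul_pow, Real.sq_sqrt (Nat.cast_nonneg _)]
    nlinarith [(Nat.cast_nonneg n : (0 : ℝ) ≤ n)]
  exact_mod_cast h

theorem burn_fence_upper_general (c : ℝ) (hc : 0 < c) (n m ℓ : ℕ)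
    (hm : (m : ℝ) = c * Real.sqrt n)
    (hℓ : ℓ = ⌈Real.rpow (c / 2) (2 / 3)⌉₊) :
    burn (gridGraph m n) ≤ 2 * ⌈Real.sqrt (ℓ * n)⌉₊ + ℓ - 1 := by
  set k := ⌈Real.sqrt (ℓ * n)⌉₊
  have hk : ℓ * n ≤ k ^ 2 := by simpa [k] using Nat.le_ceil_sqrt_sq (ℓ * n)
  have hm2 : m ^ 2 ≤ 4 * ℓ ^ 3 * n := sq_le_four_mul_cube_mul hc.le hm (hℓ ▸ Nat.le_ceil _)
  have hmk : m ≤ 2 * ℓ * k := by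
    rw [← Nat.pow_le_pow_iff_left two_ne_zero]
    calc m ^ 2 ≤ 4 * ℓ ^ 2 * (ℓ * n) := by linarith
      _ ≤ 4 * ℓ ^ 2 * k ^ 2 := Nat.mul_le_mul_left _ hk
      _ = (2 * ℓ * k) ^ 2 := by ring
  exact burn_gridGraph_le hk (by linarith)

/-- Upper bound for fences: if `ℓ = ⌈(c/2)^(2/3)⌉` and `c√n ∈ ℕ`, then
`b(G_{c√n, n}) ≤ 2⌈√(ℓn)⌉ + ℓ - 1`. -/
theorem burn_fence_upper (c : ℝ) (hc : 0 < c) (n m ℓ : ℕ) (hℓ1 : 1 ≤ ℓ)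
    (hm : (m : ℝ) = c * Real.sqrt n)
    (hℓ : ℓ = ⌈Real.rpow (c / 2) (2 / 3)⌉₊) :
    burn (gridGraph m n) ≤ 2 * ⌈Real.sqrt (ℓ * n)⌉₊ + ℓ - 1 :=
  burn_fence_upper_general c hc n m ℓ hm hℓ
end
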